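/- arXiv:2504.11957 — 4 statements merged into one kernel-verified Lean document; each statement's English description precedes it below -/
import Mathlib

section
/- Let |ψ⟩ = Σ_{i=1}^r a_i |i⟩⊗|i⟩ ∈ ℂ^r ⊗ ℂ^r with Σ a_i² = 1 and all a_i real nonzero (Schmidt rank r ≥ 2). Define |p_i⟩ = |i⟩ ⊗ (1/√(r−1)) Σ_{j≠i} |j⟩ for i = 1,…,r. Then: (1) the |p_i⟩ are pairwise orthonormal product vectors; (2) ⟨ψ|p_i⟩ = 0 for all i; (3) with λ = 1/√r and μ_i = √((r−1)/r)·a_i, the superposition λ|ψ⟩ + Σ_{i=1}^r μ_i |p_i⟩ equals the product vector (Σ_{i=1}^r a_i |i⟩) ⊗ ((1/√r) Σ_{i=1}^r |i⟩). -/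
open scoped BigOperators

/-- Hermitian inner product of two vectors in ℂ^r ⊗ ℂ^r, identified with r×r matrices. -/
noncomputable def matInner {r : ℕ} (A B : Matrix (Fin r) (Fin r) ℂ) : ℂ :=
  ∑ i, ∑ j, (starRingEnd ℂ) (A i j) * B i j

/-- For `|ψ⟩ = Σᵢ aᵢ |i⟩⊗|i⟩` (all `aᵢ` real nonzero, `Σ aᵢ² = 1`,
`r ≥ 2`) and `|pᵢ⟩ = |i⟩ ⊗ (1/√(r−1)) Σ_{j≠i} |j⟩`: (1) the `|pᵢ⟩` are pairwise
orthonormal product vectors; (2) `⟨ψ|pᵢ⟩ = 0`; (3) with `λ = 1/√r` and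
`μᵢ = √((r−1)/r)·aᵢ`, the superposition `λ|ψ⟩ + Σ μᵢ|pᵢ⟩` equals the product vector
`(Σ aᵢ|i⟩) ⊗ ((1/√r) Σ |i⟩)`. -/
theorem orthonormal_products_kill_entanglement
    (r : ℕ) (hr : 2 ≤ r) (a : Fin r → ℝ) (ha : ∀ i, a i ≠ 0)
    (hnorm : ∑ i, (a i) ^ 2 = 1)
    (ψ : Matrix (Fin r) (Fin r) ℂ)
    (hψ : ψ = Matrix.of fun i j => if i = j then (a i : ℂ) else 0)
    (p : Fin r → Matrix (Fin r) (Fin r) ℂ)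
    (hp : ∀ i, p i = Matrix.vecMulVec (fun x => if x = i then 1 else 0)
        (fun j => if j = i then 0 else ((Real.sqrt (r - 1) : ℝ) : ℂ)⁻¹)) :
    (∀ i j, matInner (p i) (p j) = if i = j then 1 else 0) ∧
    (∀ i, matInner ψ (p i) = 0) ∧
    (((Real.sqrt r : ℝ) : ℂ)⁻¹ • ψ
        + ∑ i, ((Real.sqrt ((r - 1) / r) : ℝ) * a i : ℂ) • p i
      = Matrix.vecMulVec (fun i => (a i : ℂ)) (fun _ => ((Real.sqrt r : ℝ) : ℂ)⁻¹)) := by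
  have hr2 : (2 : ℝ) ≤ (r : ℝ) := by exact_mod_cast hr
  have hrm1 : (0 : ℝ) < (r : ℝ) - 1 := by linarith
  have hrpos : (0 : ℝ) < (r : ℝ) := by linarith
  have hs1 : Real.sqrt ((r : ℝ) - 1) ^ 2 = (r : ℝ) - 1 := Real.sq_sqrt (le_of_lt hrm1)
  have hs1ne : Real.sqrt ((r : ℝ) - 1) ≠ 0 := by positivity
  have hsr : Real.sqrt (r : ℝ) ≠ 0 := by positivity
  refine ⟨?_, ?_, ?_⟩
  · intro i j
    rw [matInner]
    simp only [hp, Matrix.vecMulVec_apply]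
    by_cases hij : i = j
    · subst hij
      rw [if_pos rfl, Finset.sum_eq_single i]
      · simp only [eq_self_iff_true, if_true, map_one, one_mul]
        have key : ∀ y : Fin r, (starRingEnd ℂ) (if y = i then 0 else (((r : ℝ) - 1).sqrt : ℂ)⁻¹) *
            (if y = i then 0 else (((r : ℝ) - 1).sqrt : ℂ)⁻¹)
            = if y = i then 0 else (((r : ℝ) - 1 : ℝ) : ℂ)⁻¹ := by
          intro y
          by_cases hy : y = i
          · simp [hy]
          · rw [if_neg hy, if_neg hy, map_inv₀, Complex.conj_ofReal,
              ← mul_inv, ← Complex.ofReal_mul, ← sq, hs1]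
        rw [Finset.sum_congr rfl fun y _ => key y, Finset.sum_ite, Finset.sum_const,
          Finset.sum_const, Finset.filter_eq', if_pos (Finset.mem_univ i),
          Finset.filter_ne', Finset.card_erase_of_mem (Finset.mem_univ i)]
        simp only [Finset.card_singleton, Finset.card_univ, Fintype.card_fin, smul_zero,
          zero_add, nsmul_eq_mul]
        have hcast : ((r - 1 : ℕ) : ℂ) = (((r : ℝ) - 1 : ℝ) : ℂ) := by
          push_cast [Nat.cast_sub (by omega : 1 ≤ r)]; ring
        rw [hcast]
        have hne : (((r : ℝ) - 1 : ℝ) : ℂ) ≠ 0 := by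
          exact_mod_cast Complex.ofReal_ne_zero.mpr (ne_of_gt hrm1)
        rw [mul_inv_cancel₀ hne]
      · intro b _ hb
        simp [hb]
      · simp
    · rw [if_neg hij]
      apply Finset.sum_eq_zero
      intro x _
      apply Finset.sum_eq_zero
      intro y _
      by_cases hx : x = i
      · subst hx
        have : ¬ x = j := hij
        simp [this]
      · simp [hx]
  · intro i
    rw [matInner, hψ]
    apply Finset.sum_eq_zero
    intro x _
    apply Finset.sum_eq_zero
    intro y _
    simp only [hp, Matrix.of_apply, Matrix.vecMulVec_apply]
    by_cases hxy : x = y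
    · subst hxy
      by_cases hx : x = i <;> simp [hx]
    · simp [hxy]
  · ext x y
    rw [Matrix.add_apply, Matrix.smul_apply, Matrix.sum_apply, Matrix.vecMulVec_apply,
      Finset.sum_eq_single x]
    · rw [hψ, hp, Matrix.smul_apply, Matrix.of_apply, Matrix.vecMulVec_apply]
      simp only [eq_self_iff_true, if_true, one_mul, smul_eq_mul]
      have key : (Real.sqrt (((r : ℝ) - 1) / r) : ℝ) * (Real.sqrt ((r : ℝ) - 1))⁻¹
          = (Real.sqrt (r : ℝ))⁻¹ := by
        rw [Real.sqrt_div hrm1.le]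
        field_simp
      by_cases hy : y = x
      · subst hy
        simp [mul_comm]
      · rw [if_neg (fun h => hy h.symm), mul_zero, zero_add, if_neg hy]
        have h2 : Real.sqrt (((r : ℝ) - 1) / r) * a x * (Real.sqrt ((r : ℝ) - 1))⁻¹
            = a x * (Real.sqrt (r : ℝ))⁻¹ := by
          rw [mul_right_comm, key, mul_comm]
        rw [← Complex.ofReal_inv, ← Complex.ofReal_inv, ← Complex.ofReal_mul,
          ← Complex.ofReal_mul _ ((Real.sqrt ((r : ℝ) - 1))⁻¹), h2, Complex.ofReal_mul]
    · intro b _ hb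
      have hxb : ¬ x = b := Ne.symm hb
      simp [hp, Matrix.smul_apply, Matrix.vecMulVec_apply, hxb]
    · simp
end

section
/- Let |ψ⟩ = a_0|00⟩ + a_1|11⟩ ∈ ℂ² ⊗ ℂ² with a_0, a_1 > 0, a_0² + a_1² = 1, and |a_0| = |a_1| = 1/√2. Then there is no unit product vector |p⟩ = |α⟩⊗|β⟩ orthogonal to |ψ⟩ and no p ∈ (0,1) such that √p |ψ⟩ + √(1−p) |p⟩ is a product vector. -/
open scoped BigOperators

/-- Hermitian inner product on ℂ²⊗ℂ², identified with 2×2 matrices. -/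
noncomputable def matInner2 (A B : Matrix (Fin 2) (Fin 2) ℂ) : ℂ :=
  ∑ i, ∑ j, (starRingEnd ℂ) (A i j) * B i j

/-- For the maximally entangled `|ψ⟩ = a₀|00⟩ + a₁|11⟩` with
`a₀, a₁ > 0`, `a₀² + a₁² = 1` and `|a₀| = |a₁| = 1/√2`, there is no unit product
vector `|p⟩ = α⊗β` orthogonal to `|ψ⟩` and no `p ∈ (0,1)` such that
`√p|ψ⟩ + √(1−p)|p⟩` is a product vector (determinant-zero matrix). -/
theorem no_orthogonal_product_superposition_of_maximally_entangled
    (a0 a1 : ℝ) (h0 : 0 < a0) (h1 : 0 < a1) (hn : a0 ^ 2 + a1 ^ 2 = 1)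
    (h0e : |a0| = (Real.sqrt 2)⁻¹) (h1e : |a1| = (Real.sqrt 2)⁻¹)
    (ψ : Matrix (Fin 2) (Fin 2) ℂ) (hψ : ψ = !![(a0 : ℂ), 0; 0, (a1 : ℂ)]) :
    ¬ ∃ (α β : Fin 2 → ℂ) (p : ℝ), p ∈ Set.Ioo (0 : ℝ) 1 ∧
        matInner2 (Matrix.vecMulVec α β) (Matrix.vecMulVec α β) = 1 ∧
        matInner2 ψ (Matrix.vecMulVec α β) = 0 ∧
        ((Real.sqrt p : ℂ) • ψ
          + (Real.sqrt (1 - p) : ℂ) • Matrix.vecMulVec α β).det = 0 := by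
  rintro ⟨α, β, p, ⟨hp0, hp1⟩, hnorm, horth, hdet⟩
  have ha : a0 = a1 := by
    have e0 := abs_of_pos h0
    have e1 := abs_of_pos h1
    linarith [h0e, h1e]
  subst hψ
  simp only [matInner2, Matrix.vecMulVec_apply, Fin.sum_univ_two,
    Matrix.det_fin_two, Matrix.add_apply, Matrix.smul_apply,
    Matrix.cons_val', Matrix.cons_val_zero, Matrix.cons_val_one,
    Matrix.head_cons, Matrix.head_fin_const, Matrix.empty_val',
    Matrix.cons_val_fin_one, smul_eq_mul, map_ofNat,
    Complex.conj_ofReal, map_zero, zero_mul, add_zero, zero_add] at horth hdet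
  norm_num [Matrix.cons_val_zero, Matrix.cons_val_one, Matrix.head_cons,
    Complex.conj_ofReal] at horth hdet
  -- horth : a0 * (α 0 * β 0) + a1 * (α 1 * β 1) = 0
  -- use a0 = a1 and vecMulVec det 0 (by ring) to reduce hdet to p * a0 * a1 = 0
  have hsp : (Real.sqrt p : ℂ) * (Real.sqrt p : ℂ) = (p : ℂ) := by
    rw [← Complex.ofReal_mul, Real.mul_self_sqrt hp0.le]
  have hca : (a0 : ℂ) = (a1 : ℂ) := by exact_mod_cast ha
  have key : (p : ℂ) * a0 * a1 = 0 := by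
    rw [← hdet]
    rw [← hca] at horth ⊢
    linear_combination (-(Real.sqrt p : ℂ) * (Real.sqrt (1 - p) : ℂ)) * horth +
      (-(a0 : ℂ) * (a0 : ℂ)) * hsp
  have : (p : ℂ) * a0 * a1 ≠ 0 := by
    have h : p * a0 * a1 ≠ 0 := by positivity
    exact_mod_cast h
  exact this key
end

section
/- Let |ψ⟩ = a_0|00⟩ + a_1|11⟩ ∈ ℂ² ⊗ ℂ² with a_0, a_1 real positive, a_0² + a_1² = 1, and a_0 ≠ a_1. Then there exist p ∈ (0,1) and a unit product vector |p_1⟩ = |α⟩⊗|β⟩ with ⟨ψ|p_1⟩ = 0 such that √p |ψ⟩ + √(1−p) |p_1⟩ is a product vector. -/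
open scoped BigOperators

/-- For `|ψ⟩ = a₀|00⟩ + a₁|11⟩` with `a₀, a₁ > 0`, `a₀² + a₁² = 1`
and `a₀ ≠ a₁`, there exist `p ∈ (0,1)` and a unit product vector `|p₁⟩ = α⊗β`
orthogonal to `|ψ⟩` such that `√p|ψ⟩ + √(1−p)|p₁⟩` is a product vector
(its 2×2 matrix has determinant 0). -/
theorem exists_orthogonal_product_superposition_of_nonmaximal
    (a0 a1 : ℝ) (h0 : 0 < a0) (h1 : 0 < a1) (hn : a0 ^ 2 + a1 ^ 2 = 1)
    (hne : a0 ≠ a1)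
    (ψ : Matrix (Fin 2) (Fin 2) ℂ) (hψ : ψ = !![(a0 : ℂ), 0; 0, (a1 : ℂ)]) :
    ∃ (p : ℝ) (α β : Fin 2 → ℂ), p ∈ Set.Ioo (0 : ℝ) 1 ∧
      matInner2 (Matrix.vecMulVec α β) (Matrix.vecMulVec α β) = 1 ∧
      matInner2 ψ (Matrix.vecMulVec α β) = 0 ∧
      ((Real.sqrt p : ℂ) • ψ
        + (Real.sqrt (1 - p) : ℂ) • Matrix.vecMulVec α β).det = 0 := by
  set c : ℝ := a0 ^ 2 - a1 ^ 2 with hc_def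
  have ha01 : 0 < a0 * a1 := mul_pos h0 h1
  have hc : c ≠ 0 := by
    have h2 : a0 - a1 ≠ 0 := sub_ne_zero.mpr hne
    have h3 : 0 < a0 + a1 := by linarith
    have hcc : c = (a0 - a1) * (a0 + a1) := by rw [hc_def]; ring
    rw [hcc]
    exact mul_ne_zero h2 (ne_of_gt h3)
  have hc2 : 0 < c ^ 2 := by positivity
  set S : ℝ := (a1 ^ 2 + c ^ 2) * (a0 ^ 2 + c ^ 2) with hS_def
  have hS : 0 < S := by positivity
  set l : ℝ := 1 / Real.sqrt S with hl_def
  have hsqS : 0 < Real.sqrt S := Real.sqrt_pos.mpr hS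
  have hl : 0 < l := by positivity
  have hl2 : l ^ 2 * S = 1 := by
    rw [hl_def, div_pow, one_pow, Real.sq_sqrt hS.le]
    field_simp
  set r : ℝ := l * c ^ 2 / (a0 * a1) with hr_def
  have hr : 0 < r := by positivity
  set p : ℝ := r ^ 2 / (1 + r ^ 2) with hp_def
  have h1r : 0 < 1 + r ^ 2 := by positivity
  have hp0 : 0 < p := by positivity
  have hp1 : p < 1 := by
    rw [hp_def, div_lt_one h1r]; linarith
  have hsp : Real.sqrt p = r / Real.sqrt (1 + r ^ 2) := by
    rw [hp_def, Real.sqrt_div (by positivity), Real.sqrt_sq hr.le]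
  have h1p : 1 - p = 1 / (1 + r ^ 2) := by
    rw [hp_def]; field_simp; ring
  have hq : Real.sqrt (1 - p) = 1 / Real.sqrt (1 + r ^ 2) := by
    rw [h1p, Real.sqrt_div (by norm_num), Real.sqrt_one]
  have hkey : Real.sqrt p * (a0 * a1) = Real.sqrt (1 - p) * (l * c ^ 2) := by
    rw [hsp, hq, hr_def]
    field_simp
  refine ⟨p, ![(a1 : ℂ), (c : ℂ)], ![((l * c : ℝ) : ℂ), ((-(l * a0) : ℝ) : ℂ)],
    ⟨hp0, hp1⟩, ?_, ?_, ?_⟩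
  · simp only [matInner2, Matrix.vecMulVec_apply, Fin.sum_univ_two,
      Matrix.cons_val_zero, Matrix.cons_val_one, Matrix.head_cons, map_mul,
      Complex.conj_ofReal]
    push_cast
    norm_cast
    nlinarith [hl2, sq_nonneg l, sq_nonneg c]
  · rw [hψ]
    simp only [matInner2, Matrix.vecMulVec_apply, Fin.sum_univ_two,
      Matrix.cons_val_zero, Matrix.cons_val_one, Matrix.head_cons,
      Matrix.of_apply, Matrix.cons_val', Matrix.head_fin_const, map_mul,
      Complex.conj_ofReal, map_zero]
    push_cast
    ring
  · rw [hψ, Matrix.det_fin_two]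
    simp only [Matrix.add_apply, Matrix.smul_apply, Matrix.vecMulVec_apply,
      Matrix.cons_val_zero, Matrix.cons_val_one, Matrix.head_cons,
      Matrix.of_apply, Matrix.cons_val', Matrix.head_fin_const, smul_eq_mul]
    have hreal : (Real.sqrt p * a0 + Real.sqrt (1 - p) * (a1 * (l * c))) *
        (Real.sqrt p * a1 + Real.sqrt (1 - p) * (c * (-(l * a0)))) -
        (Real.sqrt p * 0 + Real.sqrt (1 - p) * (a1 * (-(l * a0)))) *
        (Real.sqrt p * 0 + Real.sqrt (1 - p) * (c * (l * c))) = 0 := by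
      have expand : (Real.sqrt p * a0 + Real.sqrt (1 - p) * (a1 * (l * c))) *
          (Real.sqrt p * a1 + Real.sqrt (1 - p) * (c * (-(l * a0)))) -
          (Real.sqrt p * 0 + Real.sqrt (1 - p) * (a1 * (-(l * a0)))) *
          (Real.sqrt p * 0 + Real.sqrt (1 - p) * (c * (l * c))) =
          Real.sqrt p * (Real.sqrt p * (a0 * a1) - Real.sqrt (1 - p) * (l * c ^ 2)) := by
        have hcc : c * (a1 ^ 2 - a0 ^ 2) = -c ^ 2 := by rw [hc_def]; ring
        linear_combination (Real.sqrt p * Real.sqrt (1 - p) * l) * hcc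
      rw [expand, hkey]; ring
    push_cast
    exact_mod_cast congrArg (Complex.ofReal) hreal
end

section
/- Let r ≥ 3 and |ψ⟩ = Σ_{i=1}^r a_i |i⟩^{⊗3} ∈ (ℂ^r)^{⊗3} with a_i real, Σ a_i² = 1, and not all |a_i| = 1/√r (and all a_i ≠ 0). Then there exist 2r − 1 fully product vectors |q_1⟩,…,|q_{2r−1}⟩ in (ℂ^r)^{⊗3}, each orthogonal to |ψ⟩ (but not necessarily mutually orthogonal), and scalars λ ≠ 0, η_1, …, η_{2r−1} such that λ|ψ⟩ + Σ_j η_j |q_j⟩ is a fully product vector α⊗β⊗γ. -/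
open scoped BigOperators

/-- Fully product tripartite vector in (ℂ^r)^{⊗3}. -/
def IsProd3 {r : ℕ} (T : Fin r → Fin r → Fin r → ℂ) : Prop :=
  ∃ (α β γ : Fin r → ℂ), T = fun i j k => α i * β j * γ k

/-- Hermitian inner product on (ℂ^r)^{⊗3}. -/
noncomputable def triInner {r : ℕ} (S T : Fin r → Fin r → Fin r → ℂ) : ℂ :=
  ∑ i, ∑ j, ∑ k, (starRingEnd ℂ) (S i j k) * T i j k

set_option maxHeartbeats 1000000 in
/-- Theorem 5 of the paper. -/
theorem ghz_entanglement_vanished_by_2r_sub_one_products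
    (r : ℕ) (hr : 3 ≤ r) (a : Fin r → ℝ) (ha : ∀ i, a i ≠ 0)
    (hnorm : ∑ i, (a i) ^ 2 = 1)
    (hnotunif : ¬ ∀ i, |a i| = (Real.sqrt r)⁻¹)
    (ψ : Fin r → Fin r → Fin r → ℂ)
    (hψ : ψ = fun i j k => if i = j ∧ j = k then (a i : ℂ) else 0) :
    ∃ q : Fin (2 * r - 1) → (Fin r → Fin r → Fin r → ℂ),
      (∀ j, IsProd3 (q j)) ∧ (∀ j, triInner ψ (q j) = 0) ∧
      ∃ (lam : ℂ) (η : Fin (2 * r - 1) → ℂ), lam ≠ 0 ∧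
        IsProd3 (lam • ψ + ∑ j, η j • q j) := by
  obtain ⟨n, rfl⟩ : ∃ n, r = n + 3 := ⟨r - 3, by omega⟩
  clear hr
  subst hψ
  have hexist : ∃ i j : Fin (n + 3), (a i) ^ 2 ≠ (a j) ^ 2 := by
    by_contra hcon
    push_neg at hcon
    apply hnotunif
    have h0 : ∀ k : Fin (n + 3), a k ^ 2 = a 0 ^ 2 := fun k => hcon k 0
    have hsum : (1 : ℝ) = (n + 3 : ℕ) * a 0 ^ 2 := by
      rw [← hnorm, Finset.sum_congr rfl fun x _ => h0 x]
      simp [Finset.sum_const, Finset.card_univ, mul_comm]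
    intro k
    have hpos : (0 : ℝ) < ((n + 3 : ℕ) : ℝ) := by positivity
    have h1 : a k ^ 2 = ((n + 3 : ℕ) : ℝ)⁻¹ := by
      rw [h0 k]
      field_simp
      push_cast at hsum ⊢
      linarith
    have h2 : |a k| = Real.sqrt (((n + 3 : ℕ) : ℝ)⁻¹) := by
      rw [← Real.sqrt_sq_eq_abs, h1]
    rw [h2, Real.sqrt_inv]
  obtain ⟨i, j, hABR⟩ := hexist
  have hij : i ≠ j := by rintro rfl; exact hABR rfl
  have haC : ∀ k : Fin (n + 3), (a k : ℂ) ≠ 0 := fun k => Complex.ofReal_ne_zero.mpr (ha k)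
  have cancel : ∀ (z : ℂ) (p : Fin (n + 3)), (a p : ℂ) * (z / (a p : ℂ)) = z := fun z p => by
    rw [mul_comm, div_mul_cancel₀ z (haC p)]
  set A : ℂ := (a i : ℂ) ^ 2 with hAdef
  set B : ℂ := (a j : ℂ) ^ 2 with hBdef
  have hA0 : A ≠ 0 := pow_ne_zero 2 (haC i)
  have hB0 : B ≠ 0 := pow_ne_zero 2 (haC j)
  have hAB : A ≠ B := by
    rw [hAdef, hBdef]
    intro hEq
    apply hABR
    have h : ((a i ^ 2 : ℝ) : ℂ) = ((a j ^ 2 : ℝ) : ℂ) := by push_cast; exact hEq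
    exact_mod_cast h
  have hnum1 : A + ((n : ℂ) + 1) * B ≠ 0 := by
    have h : ((a i ^ 2 + (n + 1) * a j ^ 2 : ℝ) : ℂ) ≠ 0 := by
      rw [Complex.ofReal_ne_zero]
      have h1 : (0:ℝ) < a i ^ 2 := lt_of_le_of_ne (sq_nonneg _) (Ne.symm (pow_ne_zero 2 (ha i)))
      have h2 : (0:ℝ) ≤ (n + 1 : ℝ) * a j ^ 2 := by positivity
      nlinarith
    rw [hAdef, hBdef]
    intro hEq
    apply h
    rw [← hEq]
    push_cast
    ring
  have hnum2 : B + ((n : ℂ) + 1) * A ≠ 0 := by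
    have h : ((a j ^ 2 + (n + 1) * a i ^ 2 : ℝ) : ℂ) ≠ 0 := by
      rw [Complex.ofReal_ne_zero]
      have h1 : (0:ℝ) < a j ^ 2 := lt_of_le_of_ne (sq_nonneg _) (Ne.symm (pow_ne_zero 2 (ha j)))
      have h2 : (0:ℝ) ≤ (n + 1 : ℝ) * a i ^ 2 := by positivity
      nlinarith
    rw [hAdef, hBdef]
    intro hEq
    apply h
    rw [← hEq]
    push_cast
    ring
  clear_value A B
  have hABsub : A - B ≠ 0 := sub_ne_zero.mpr hAB
  have hBA : B - A ≠ 0 := sub_ne_zero.mpr (Ne.symm hAB)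
  set di : ℂ := A * (A + ((n : ℂ) + 1) * B) / (A - B) with hdidef
  set dj : ℂ := B * (B + ((n : ℂ) + 1) * A) / (B - A) with hdjdef
  have hdi0 : di ≠ 0 := div_ne_zero (mul_ne_zero hA0 hnum1) hABsub
  have hdj0 : dj ≠ 0 := div_ne_zero (mul_ne_zero hB0 hnum2) hBA
  set kk : ℂ := -di / dj with hkkdef
  set rho : ℂ := -(B * di) / (A * dj) with hrhodef
  set s : ℂ := A * B / (di * (A - B)) with hsdef
  have Pdi : di * (A - B) = A * (A + ((n : ℂ) + 1) * B) := by
    rw [hdidef]; field_simp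
  have Pdj : dj * (B - A) = B * (B + ((n : ℂ) + 1) * A) := by
    rw [hdjdef]; field_simp
  have Pkk : kk * dj = -di := by
    rw [hkkdef]; field_simp
  have Prho : rho * (A * dj) = -(B * di) := by
    rw [hrhodef]; field_simp
  have Ps : s * (di * (A - B)) = A * B := by
    rw [hsdef]; field_simp
  clear_value di dj kk rho s
  clear hdidef hdjdef hkkdef hrhodef hsdef
  have K1 : A * dj + B * di + (n : ℂ) * A * B = 0 := by
    have K1' : (A * dj + B * di + (n : ℂ) * A * B) * (A - B) = 0 := by
      linear_combination B * Pdi - A * Pdj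
    have := (mul_eq_zero.mp K1').resolve_right hABsub
    linear_combination this
  have W1 : A * (s * kk * dj - s * rho * dj) = -(A * B) := by
    linear_combination A * s * Pkk - s * Prho - Ps
  have F1 : s * di + kk * s * dj = 0 := by
    linear_combination s * Pkk
  have F2 : ((1 - s * ((n : ℂ) + 1)) * di - A) + rho * ((1 - s * ((n : ℂ) + 1)) * dj) = 0 := by
    have F2' : (((1 - s * ((n : ℂ) + 1)) * di - A) + rho * ((1 - s * ((n : ℂ) + 1)) * dj)) * A = 0 := by
      linear_combination (1 - s * ((n : ℂ) + 1)) * Prho + Pdi - ((n : ℂ) + 1) * Ps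
    have := (mul_eq_zero.mp F2').resolve_right hA0
    linear_combination this
  have F3 : rho * (1 - s * (n : ℂ)) + kk * s * (n : ℂ) = 1 := by
    have F3' : (rho * (1 - s * (n : ℂ)) + kk * s * (n : ℂ) - 1) * (A * dj) = 0 := by
      linear_combination Prho + (n : ℂ) * W1 - K1
    have := (mul_eq_zero.mp F3').resolve_right (mul_ne_zero hA0 hdj0)
    linear_combination this
  have F4 : rho * ((1 - s * ((n : ℂ) + 1)) * di - A) + kk * s * ((n : ℂ) + 1) * di = di := by
    have F4' : (rho * ((1 - s * ((n : ℂ) + 1)) * di - A) + kk * s * ((n : ℂ) + 1) * di - di) * (A * dj) = 0 := by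
      linear_combination ((1 - s * ((n : ℂ) + 1)) * di - A) * Prho + s * ((n : ℂ) + 1) * di * A * Pkk - ((n : ℂ) + 1) * di * Ps - di * K1
    have := (mul_eq_zero.mp F4').resolve_right (mul_ne_zero hA0 hdj0)
    linear_combination this
  have F5 : B + rho * ((1 - s * ((n : ℂ) + 1)) * dj) + kk * s * ((n : ℂ) + 1) * dj = dj := by
    have F5' : (B + rho * ((1 - s * ((n : ℂ) + 1)) * dj) + kk * s * ((n : ℂ) + 1) * dj - dj) * A = 0 := by
      linear_combination (1 - s * ((n : ℂ) + 1)) * Prho + s * ((n : ℂ) + 1) * A * Pkk - ((n : ℂ) + 1) * Ps - K1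
    have := (mul_eq_zero.mp F5').resolve_right hA0
    linear_combination this
  -- vectors and tensors
  set d : Fin (n + 3) → ℂ := fun k => if k = i then di else if k = j then dj else (a k : ℂ) ^ 2 with hddef
  set c : Fin (n + 3) → ℂ := fun k => d k / (a k : ℂ) with hcdef
  have hck : ∀ k, k ≠ i → k ≠ j → c k = (a k : ℂ) := by
    intro k h1 h2
    rw [hcdef]
    simp only [hddef, h1, h2, if_false]
    rw [sq, mul_div_assoc, div_self (haC k), mul_one]
  have hci : c i = di / (a i : ℂ) := by rw [hcdef]; simp [hddef]
  have hcj : c j = dj / (a j : ℂ) := by rw [hcdef]; simp [hddef, Ne.symm hij]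
  set G : Fin (n + 3) → (Fin (n + 3) → Fin (n + 3) → Fin (n + 3) → ℂ) :=
    fun k p q w => (if p = k then (1:ℂ) else 0) * (if q = k then (1:ℂ) else 0) *
      ((a k : ℂ) * (if w = k then 0 else 1)) with hGdef
  set uOut : Fin (n + 3) → Fin (n + 3) → ℂ :=
    fun k p => c p - (if p = k then (a k : ℂ) else 0) with huOdef
  set vOut : Fin (n + 3) → Fin (n + 3) → ℂ :=
    fun k q => (if q = k then (1:ℂ) else 0) + s * (if q = i then 1 else 0) +
      kk * s * (if q = j then 1 else 0) with hvOdef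
  set gv : Fin (n + 3) → ℂ :=
    fun p => (1 - s * ((n : ℂ) + 1)) * d p - (if p = i then A else 0) +
      (if p = i ∨ p = j then 0 else s * (a p : ℂ) ^ 2) with hgvdef
  set uR : Fin (n + 3) → ℂ := fun p => gv p / (a p : ℂ) with huRdef
  have hgvI : gv i = (1 - s * ((n : ℂ) + 1)) * di - A := by simp [hgvdef, hddef]
  have hgvJ : gv j = (1 - s * ((n : ℂ) + 1)) * dj := by simp [hgvdef, hddef, hij, Ne.symm hij]
  have hgvO : ∀ p, p ≠ i → p ≠ j → gv p = (1 - s * ((n : ℂ) + 1)) * (a p : ℂ) ^ 2 + s * (a p : ℂ) ^ 2 := by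
    intro p h1 h2
    simp [hgvdef, hddef, h1, h2]
  set vR : Fin (n + 3) → ℂ :=
    fun q => (if q = i then (1:ℂ) else 0) + rho * (if q = j then 1 else 0) with hvRdef
  set Qf : Fin (n + 3) → (Fin (n + 3) → Fin (n + 3) → Fin (n + 3) → ℂ) :=
    fun k p q w => if k = j then 0 else if k = i then uR p * vR q * 1
      else uOut k p * vOut k q * 1 with hQfdef
  have hQfj : Qf j = 0 := by
    funext p q w
    simp [hQfdef]
  have h2r : n + 3 + (n + 2) = 2 * (n + 3) - 1 := by omega
  set EE : (Fin (n + 3) ⊕ Fin (n + 2)) ≃ Fin (2 * (n + 3) - 1) :=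
    finSumFinEquiv.trans (finCongr h2r) with hEEdef
  refine ⟨fun mm => Sum.elim G (fun l => Qf (Fin.succAbove j l)) (EE.symm mm), ?_, ?_, 1,
    fun _ => 1, one_ne_zero, ?_⟩
  · -- products
    intro mm
    rcases hmm : EE.symm mm with k | l <;> simp only [hmm, Sum.elim_inl, Sum.elim_inr]
    · exact ⟨fun p => if p = k then 1 else 0, fun q => if q = k then 1 else 0,
        fun w => (a k : ℂ) * (if w = k then 0 else 1), by funext p q w; simp only [hGdef]⟩
    · rcases eq_or_ne (Fin.succAbove j l) j with hkj | hkj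
      · exact ⟨0, 0, 0, by funext p q w; simp [hQfdef, hkj]⟩
      · rcases eq_or_ne (Fin.succAbove j l) i with hki | hki
        · exact ⟨uR, vR, fun _ => 1, by funext p q w; simp [hQfdef, hki, hij]⟩
        · exact ⟨uOut (Fin.succAbove j l), vOut (Fin.succAbove j l), fun _ => 1,
            by funext p q w; simp [hQfdef, hkj, hki]⟩
  · -- orthogonality
    have htri : ∀ T : Fin (n + 3) → Fin (n + 3) → Fin (n + 3) → ℂ,
        triInner (fun i j k => if i = j ∧ j = k then (a i : ℂ) else 0) T
          = ∑ p, (a p : ℂ) * T p p p := by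
      intro T
      simp only [triInner]
      refine Finset.sum_congr rfl fun x _ => ?_
      have hout : ∀ y : Fin (n + 3), y ≠ x →
          (∑ z, (starRingEnd ℂ) (if x = y ∧ y = z then (a x : ℂ) else 0) * T x y z) = 0 := by
        intro y hy
        apply Finset.sum_eq_zero
        intro z _
        simp [Ne.symm hy]
      rw [Finset.sum_eq_single x _ (fun h => absurd (Finset.mem_univ x) h)]
      · rw [Finset.sum_eq_single x _ (fun h => absurd (Finset.mem_univ x) h)]
        · simp [Complex.conj_ofReal]
        · intro z _ hz
          simp [Ne.symm hz]
      · intro y _ hy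
        exact hout y hy

    have horthG : ∀ k, ∑ p, (a p : ℂ) * G k p p p = 0 := by
      intro k
      apply Finset.sum_eq_zero
      intro p _
      rcases eq_or_ne p k with hp | hp
      · simp [hGdef, hp]
      · simp [hGdef, hp]
    have horthQ : ∀ k, ∑ p, (a p : ℂ) * Qf k p p p = 0 := by
      intro k
      rcases eq_or_ne k j with hkj | hkj
      · simp [hQfdef, hkj]
      · rcases eq_or_ne k i with hki | hki
        · subst hki
          have hsub : ∑ p, (a p : ℂ) * Qf k p p p
              = ∑ p ∈ ({k, j} : Finset (Fin (n + 3))), (a p : ℂ) * Qf k p p p := by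
            refine (Finset.sum_subset (Finset.subset_univ _) ?_).symm
            intro p _ hp
            simp only [Finset.mem_insert, Finset.mem_singleton, not_or] at hp
            simp [hQfdef, hkj, hvRdef, hp.1, hp.2]
          rw [hsub, Finset.sum_pair hkj]
          have hgvi : gv k = (1 - s * ((n : ℂ) + 1)) * di - A := by
            simp [hgvdef, hddef]
          have hgvj : gv j = (1 - s * ((n : ℂ) + 1)) * dj := by
            simp [hgvdef, hddef, hkj, Ne.symm hkj]
          have e1 : Qf k k k k = ((1 - s * ((n : ℂ) + 1)) * di - A) / (a k : ℂ) := by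
            simp [hQfdef, hkj, hvRdef, huRdef, hgvi]
          have e2 : Qf k j j j = (1 - s * ((n : ℂ) + 1)) * dj / (a j : ℂ) * rho := by
            simp [hQfdef, hkj, hvRdef, huRdef, Ne.symm hkj, hgvj]
          rw [e1, e2, cancel, ← mul_assoc, cancel]
          linear_combination F2
        · have hsub : ∑ p, (a p : ℂ) * Qf k p p p
              = ∑ p ∈ ({k, i, j} : Finset (Fin (n + 3))), (a p : ℂ) * Qf k p p p := by
            refine (Finset.sum_subset (Finset.subset_univ _) ?_).symm
            intro p _ hp
            simp only [Finset.mem_insert, Finset.mem_singleton, not_or] at hp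
            simp [hQfdef, hkj, hki, hvOdef, hp.1, hp.2.1, hp.2.2]
          rw [hsub, Finset.sum_insert (by simp [hki, hkj]), Finset.sum_pair hij]
          have e1 : Qf k k k k = 0 := by
            have h0 : uOut k k = 0 := by
              rw [huOdef]
              simp [hck k hki hkj]
            simp [hQfdef, hkj, hki, h0]
          have e2 : Qf k i i i = c i * s := by
            simp [hQfdef, hkj, hki, huOdef, hvOdef, Ne.symm hki, hij]
          have e3 : Qf k j j j = c j * (kk * s) := by
            simp [hQfdef, hkj, hki, huOdef, hvOdef, Ne.symm hkj, Ne.symm hij]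
          rw [e1, e2, e3, hci, hcj]
          rw [show (↑(a i) : ℂ) * (di / ↑(a i) * s) = ↑(a i) * (di / ↑(a i)) * s from by ring,
            show (↑(a j) : ℂ) * (dj / ↑(a j) * (kk * s)) = ↑(a j) * (dj / ↑(a j)) * (kk * s) from by ring,
            cancel, cancel]
          linear_combination F1

    intro mm
    rcases hmm : EE.symm mm with k | l <;> simp only [hmm, Sum.elim_inl, Sum.elim_inr]
    · rw [htri]; exact horthG k
    · rw [htri]; exact horthQ _
  · -- main identity
    refine ⟨c, fun _ => 1, fun _ => 1, ?_⟩
    have hsplit : (∑ mm : Fin (2 * (n + 3) - 1), (1:ℂ) •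
        Sum.elim G (fun l => Qf (Fin.succAbove j l)) (EE.symm mm))
        = (∑ k, G k) + (∑ k, Qf k) := by
      have h1 : ∀ mm : Fin (2 * (n + 3) - 1), (1:ℂ) •
          Sum.elim G (fun l => Qf (Fin.succAbove j l)) (EE.symm mm)
          = Sum.elim G (fun l => Qf (Fin.succAbove j l)) (EE.symm mm) := fun mm => one_smul _ _
      rw [Finset.sum_congr rfl fun mm _ => h1 mm]
      have h2 : ∑ mm : Fin (2 * (n + 3) - 1),
          Sum.elim G (fun l => Qf (Fin.succAbove j l)) (EE.symm mm)
          = ∑ x : Fin (n + 3) ⊕ Fin (n + 2), Sum.elim G (fun l => Qf (Fin.succAbove j l)) x := by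
        refine Fintype.sum_equiv EE.symm _ _ fun mm => rfl
      rw [h2, Fintype.sum_sum_type]
      simp only [Sum.elim_inl, Sum.elim_inr]
      congr 1
      have h3 : ∑ k, Qf k = Qf j + ∑ l : Fin (n + 2), Qf (Fin.succAbove j l) :=
        Fin.sum_univ_succAbove Qf j
      rw [h3, hQfj, zero_add]

    rw [hsplit]
    have hGsum : ∀ p q w : Fin (n + 3),
        (if p = q ∧ q = w then (a p : ℂ) else 0) + (∑ k, G k p q w)
          = (if q = p then (a p : ℂ) else 0) := by
      intro p q w
      have h1 : ∑ k, G k p q w = (if q = p then (a p : ℂ) * (if w = p then 0 else 1) else 0) := by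
        rw [Finset.sum_eq_single p _ (fun h => absurd (Finset.mem_univ p) h)]
        · rcases eq_or_ne q p with h | h <;> simp [hGdef, h]
        · intro k _ hk
          simp [hGdef, Ne.symm hk]
      rw [h1]
      rcases eq_or_ne q p with h | h
      · subst h
        rcases eq_or_ne w q with hw | hw
        · simp [hw]
        · simp [hw, Ne.symm hw]
      · have h' : ¬(p = q ∧ q = w) := fun hc => h hc.1.symm
        simp [h, h']
    have hcard : ((Finset.univ.erase j).erase i).card = n + 1 := by
      rw [Finset.card_erase_of_mem (Finset.mem_erase.mpr ⟨hij, Finset.mem_univ i⟩),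
        Finset.card_erase_of_mem (Finset.mem_univ j), Finset.card_univ, Fintype.card_fin]
      omega
    have hE : ∀ p : Fin (n + 3), ∑ k ∈ (Finset.univ.erase j).erase i, uOut k p
        = ((n : ℂ) + 1) * c p - (if p = i ∨ p = j then 0 else (a p : ℂ)) := by
      intro p
      have h1 : ∑ k ∈ (Finset.univ.erase j).erase i, uOut k p
          = ∑ k ∈ (Finset.univ.erase j).erase i, (c p - if p = k then (a p : ℂ) else 0) := by
        refine Finset.sum_congr rfl fun k _ => ?_
        rw [huOdef]
        rcases eq_or_ne p k with h | h <;> simp [h]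
      rw [h1, Finset.sum_sub_distrib, Finset.sum_const, hcard, Finset.sum_ite_eq]
      have hmem : ((p ∈ (Finset.univ.erase j).erase i)) ↔ ¬(p = i ∨ p = j) := by
        simp [Finset.mem_erase, not_or, and_comm]
      rcases eq_or_ne p i with h | h
      · have hnm : p ∉ (Finset.univ.erase j).erase i := fun hcon => (hmem.mp hcon) (Or.inl h)
        rw [if_neg hnm, if_pos (Or.inl h)]
        simp only [nsmul_eq_mul]
        push_cast
        ring
      · rcases eq_or_ne p j with h2 | h2
        · have hnm : p ∉ (Finset.univ.erase j).erase i := fun hcon => (hmem.mp hcon) (Or.inr h2)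
          rw [if_neg hnm, if_pos (Or.inr h2)]
          simp only [nsmul_eq_mul]
          push_cast
          ring
        · have hm : p ∈ (Finset.univ.erase j).erase i := hmem.mpr (by simp [h, h2])
          rw [if_pos hm, if_neg (by simp [h, h2] : ¬(p = i ∨ p = j))]
          simp only [nsmul_eq_mul]
          push_cast
          ring
    have hQsum : ∀ p q w : Fin (n + 3), ∑ k, Qf k p q w
        = uR p * vR q + ∑ k ∈ (Finset.univ.erase j).erase i, uOut k p * vOut k q := by
      intro p q w
      rw [← Finset.sum_erase_add _ _ (Finset.mem_univ j)]
      have hz : Qf j p q w = 0 := by rw [hQfj]; rfl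
      rw [hz, add_zero,
        ← Finset.sum_erase_add _ _ (Finset.mem_erase.mpr ⟨hij, Finset.mem_univ i⟩)]
      have hi : Qf i p q w = uR p * vR q := by simp [hQfdef, hij]
      rw [hi, add_comm]
      congr 1
      refine Finset.sum_congr rfl fun k hk => ?_
      simp only [Finset.mem_erase] at hk
      simp [hQfdef, hk.1, hk.2.1]
    funext p q w
    simp only [Pi.add_apply, Pi.smul_apply, Finset.sum_apply, smul_eq_mul, one_mul, mul_one]
    rw [← add_assoc, hGsum p q w, hQsum p q w]
    rcases eq_or_ne q i with hqi | hqi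
    · rw [hqi]
      have hvRi : vR i = 1 := by simp [hvRdef, hij]
      have hsum2 : ∑ k ∈ (Finset.univ.erase j).erase i, uOut k p * vOut k i
          = (∑ k ∈ (Finset.univ.erase j).erase i, uOut k p) * s := by
        rw [Finset.sum_mul]
        refine Finset.sum_congr rfl fun k hk => ?_
        simp only [Finset.mem_erase] at hk
        have hv : vOut k i = s := by simp [hvOdef, Ne.symm hk.1, hij]
        rw [hv]
      rw [hvRi, hsum2, hE p, mul_one]
      rcases eq_or_ne p i with hpi | hpi
      · rw [hpi, if_pos rfl, if_pos (Or.inl rfl)]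
        simp only [huRdef, hgvI, hci, sub_zero]
        field_simp [haC i]
        linear_combination -hAdef
      · rcases eq_or_ne p j with hpj | hpj
        · rw [hpj, if_neg hij, if_pos (Or.inr rfl)]
          simp only [huRdef, hgvJ, hcj, sub_zero]
          field_simp [haC j]
          ring
        · rw [if_neg (Ne.symm hpi), if_neg (by simp [hpi, hpj] : ¬(p = i ∨ p = j))]
          simp only [huRdef, hgvO p hpi hpj, hck p hpi hpj]
          field_simp [haC p]
          ring
    · rcases eq_or_ne q j with hqj | hqj
      · rw [hqj]
        have hvRj : vR j = rho := by simp [hvRdef, Ne.symm hij]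
        have hsum2 : ∑ k ∈ (Finset.univ.erase j).erase i, uOut k p * vOut k j
            = (∑ k ∈ (Finset.univ.erase j).erase i, uOut k p) * (kk * s) := by
          rw [Finset.sum_mul]
          refine Finset.sum_congr rfl fun k hk => ?_
          simp only [Finset.mem_erase] at hk
          have hv : vOut k j = kk * s := by simp [hvOdef, Ne.symm hk.2.1, Ne.symm hij]
          rw [hv]
        rw [hvRj, hsum2, hE p]
        rcases eq_or_ne p i with hpi | hpi
        · rw [hpi, if_neg (Ne.symm hij), if_pos (Or.inl rfl)]
          simp only [huRdef, hgvI, hci, sub_zero]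
          field_simp [haC i]
          linear_combination F4
        · rcases eq_or_ne p j with hpj | hpj
          · rw [hpj, if_pos rfl, if_pos (Or.inr rfl)]
            simp only [huRdef, hgvJ, hcj, sub_zero]
            field_simp [haC j]
            linear_combination F5 - hBdef
          · rw [if_neg (Ne.symm hpj), if_neg (by simp [hpi, hpj] : ¬(p = i ∨ p = j))]
            simp only [huRdef, hgvO p hpi hpj, hck p hpi hpj]
            field_simp [haC p]
            linear_combination (↑(a p) : ℂ) * F3
      · have hvRq : vR q = 0 := by simp [hvRdef, hqi, hqj]
        have hqmem : q ∈ (Finset.univ.erase j).erase i :=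
          Finset.mem_erase.mpr ⟨hqi, Finset.mem_erase.mpr ⟨hqj, Finset.mem_univ q⟩⟩
        have hstep : ∀ k ∈ (Finset.univ.erase j).erase i,
            uOut k p * vOut k q = if q = k then uOut k p else 0 := by
          intro k hk
          have hv : vOut k q = if q = k then 1 else 0 := by simp [hvOdef, hqi, hqj]
          rw [hv]
          rcases eq_or_ne q k with h | h <;> simp [h]
        rw [Finset.sum_congr rfl hstep, Finset.sum_ite_eq, if_pos hqmem, hvRq, mul_zero, zero_add]
        simp only [huOdef]
        rcases eq_or_ne p q with h | h
        · subst h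
          simp
        · rw [if_neg (Ne.symm h), if_neg h]
          simp
end
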